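/- Let τ > 0, ε ∈ (0,1), δ ∈ (0,1). Define H : [0,∞) → [0,∞) by H(x) = x for x ≤ τ(1-δ); H(x) = (1-δ)τ + δτ(x - (1-δ)τ)/(τ - x(1-ε) - (1-δ)ετ) for τ(1-δ) < x ≤ τ; H(x) = (x - (1 - ε(δ + ε - δε))τ)/ε² for x > τ. Define V : [0,∞) → [0,∞) by V(y) = y for y ≤ τ(1-δ); V(y) = -τ(y - y(1-δ)ε - (1-δ)²(1-ε)τ)/(τ - y(1-ε) - δ(2-ε)τ - ετ) for τ(1-δ) < y ≤ τ + δ(1/ε - 1)τ; V(y) = τ + ε(yε - δ(1-ε)τ - ετ) for y > τ + δ(1/ε - 1)τ. Then V(H(x)) = x for all x ≥ 0; i.e., V is the inverse of H. -/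

import Mathlib

/-!
With the paper's thresholds `τ₁ = (1 - δ)τ` and `τ₂ = τ₁ + δτ/ε`, the middle piece of `V` is
`τ₁ + k₁(y - τ₁)` for the Möbius map `k₁ y = yδτ / (y(1 - ε) + δτ)`, and the middle piece of `H`
is `τ₁ + k₁⁻¹(x - τ₁)`; the outer pieces are the mutually inverse affine maps
`x ↦ τ₂ + (x - τ)/ε²` and `y ↦ τ + ε²(y - τ₂)`. So `V ∘ H = id` once `H` maps each of the three
`x`-segments into the matching `y`-segment; for the middle one this is `k₁⁻¹ (0, δτ] = (0, δτ/ε]`.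
-/

noncomputable section

namespace PseudoVolatilityFreeze

variable {τ ε δ : ℝ}

section Segments

variable (τ ε δ)

-- Reducible, so that `rw [if_pos h]` matches them against the literal thresholds in `H` and `V`.
abbrev τ₁ : ℝ := τ * (1 - δ)

abbrev τ₂ : ℝ := τ + δ * (1 / ε - 1) * τ

def k₁ (y : ℝ) : ℝ := y * δ * τ / (y * (1 - ε) + δ * τ)

def k₁Inv (x : ℝ) : ℝ := x * δ * τ / (δ * τ - x * (1 - ε))

end Segments

theorem τ₂_eq (hε : ε ≠ 0) : τ₂ τ ε δ = τ₁ τ δ + δ * τ / ε := by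
  field_simp; ring

theorem τ₁_lt_τ₂ (hτ : 0 < τ) (hε : 0 < ε) (hδ : 0 < δ) : τ₁ τ δ < τ₂ τ ε δ := by
  rw [τ₂_eq hε.ne', lt_add_iff_pos_right]
  positivity

theorem k₁_k₁Inv {x : ℝ} (hτ : τ ≠ 0) (hδ : δ ≠ 0) (hx : δ * τ - x * (1 - ε) ≠ 0) :
    k₁ τ ε δ (k₁Inv τ ε δ x) = x := by
  unfold k₁ k₁Inv; field_simp; ring

theorem k₁Inv_denom_pos {x : ℝ} (hε : 0 < ε) (hx₀ : 0 < x) (hx : x ≤ δ * τ) :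
    0 < δ * τ - x * (1 - ε) := by
  nlinarith

theorem k₁Inv_mem_Ioc {x : ℝ} (hτ : 0 < τ) (hε : 0 < ε) (hδ : 0 < δ) (hx₀ : 0 < x)
    (hx : x ≤ δ * τ) : k₁Inv τ ε δ x ∈ Set.Ioc 0 (δ * τ / ε) := by
  have hD := k₁Inv_denom_pos hε hx₀ hx
  unfold k₁Inv
  refine ⟨by positivity, ?_⟩
  rw [div_le_div_iff₀ hD hε]
  nlinarith

theorem H_mid_eq (x : ℝ) :
    (1 - δ) * τ + δ * τ * (x - (1 - δ) * τ) / (τ - x * (1 - ε) - (1 - δ) * ε * τ) =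
      τ₁ τ δ + k₁Inv τ ε δ (x - τ₁ τ δ) := by
  unfold k₁Inv; ring

theorem V_mid_eq {v : ℝ} (hv : v * (1 - ε) + δ * τ ≠ 0) :
    -(τ * ((τ₁ τ δ + v) - (τ₁ τ δ + v) * (1 - δ) * ε - (1 - δ) ^ 2 * (1 - ε) * τ)) /
        (τ - (τ₁ τ δ + v) * (1 - ε) - δ * (2 - ε) * τ - ε * τ) =
      τ₁ τ δ + k₁ τ ε δ v := by
  unfold k₁
  rw [show τ - (τ * (1 - δ) + v) * (1 - ε) - δ * (2 - ε) * τ - ε * τ = -(v * (1 - ε) + δ * τ) by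
    ring, neg_div_neg_eq, add_div' _ _ _ hv, div_left_inj' hv]
  ring

theorem H_out_eq (hε : ε ≠ 0) (x : ℝ) :
    (x - (1 - ε * (δ + ε - δ * ε)) * τ) / ε ^ 2 = τ₂ τ ε δ + (x - τ) / ε ^ 2 := by
  field_simp; ring

theorem V_out_eq (hε : ε ≠ 0) (w : ℝ) :
    τ + ε * ((τ₂ τ ε δ + w) * ε - δ * (1 - ε) * τ - ε * τ) = τ + w * ε ^ 2 := by
  field_simp; ring

end PseudoVolatilityFreeze

end

open PseudoVolatilityFreeze in
/-- The piecewise total implied variance structure `V` of the pseudo-volatility-freeze example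
is the inverse of the corresponding `H(x) = ∫₀ˣ f(z)⁻² dz`: `V(H(x)) = x` for all `x ≥ 0`. -/
theorem stmt_9 (τ ε δ : ℝ) (hτ : 0 < τ) (hε : ε ∈ Set.Ioo (0 : ℝ) 1) (hδ : δ ∈ Set.Ioo (0 : ℝ) 1)
    (H V : ℝ → ℝ)
    (hH : ∀ x, H x =
      if x ≤ τ * (1 - δ) then x
      else if x ≤ τ then
        (1 - δ) * τ + δ * τ * (x - (1 - δ) * τ) / (τ - x * (1 - ε) - (1 - δ) * ε * τ)
      else (x - (1 - ε * (δ + ε - δ * ε)) * τ) / ε ^ 2)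
    (hV : ∀ y, V y =
      if y ≤ τ * (1 - δ) then y
      else if y ≤ τ + δ * (1 / ε - 1) * τ then
        -(τ * (y - y * (1 - δ) * ε - (1 - δ) ^ 2 * (1 - ε) * τ)) /
          (τ - y * (1 - ε) - δ * (2 - ε) * τ - ε * τ)
      else τ + ε * (y * ε - δ * (1 - ε) * τ - ε * τ)) :
    ∀ x : ℝ, 0 ≤ x → V (H x) = x := by
  obtain ⟨hε₀, hε₁⟩ := hε
  intro x _
  rcases le_or_gt x (τ * (1 - δ)) with hx₁ | hx₁
  · rw [hH, if_pos hx₁, hV, if_pos hx₁]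
  rcases le_or_gt x τ with hx₂ | hx₂
  · have hu₀ : 0 < x - τ₁ τ δ := sub_pos.2 hx₁
    have hu : x - τ₁ τ δ ≤ δ * τ := by linarith
    have hD := k₁Inv_denom_pos hε₀ hu₀ hu
    obtain ⟨hv₀, hv⟩ := k₁Inv_mem_Ioc hτ hε₀ hδ.1 hu₀ hu
    have hy₂ : τ₁ τ δ + k₁Inv τ ε δ (x - τ₁ τ δ) ≤ τ₂ τ ε δ := by
      rw [τ₂_eq hε₀.ne']; linarith
    rw [hH, if_neg hx₁.not_ge, if_pos hx₂, H_mid_eq, hV, if_neg (lt_add_of_pos_right _ hv₀).not_ge,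
      if_pos hy₂, V_mid_eq (add_pos (mul_pos hv₀ (sub_pos.2 hε₁)) (mul_pos hδ.1 hτ)).ne',
      k₁_k₁Inv hτ.ne' hδ.1.ne' hD.ne', add_sub_cancel]
  · have hy₂ : τ₂ τ ε δ < τ₂ τ ε δ + (x - τ) / ε ^ 2 :=
      lt_add_of_pos_right _ (div_pos (sub_pos.2 hx₂) (by positivity))
    have hy₁ := (τ₁_lt_τ₂ hτ hε₀ hδ.1).trans hy₂
    rw [hH, if_neg hx₁.not_ge, if_neg hx₂.not_ge, H_out_eq hε₀.ne', hV, if_neg hy₁.not_ge,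
      if_neg hy₂.not_ge, V_out_eq hε₀.ne', div_mul_cancel₀ _ (by positivity), add_sub_cancel]
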